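/- arXiv:2111.09187 — 2 statements merged into one kernel-verified Lean document; each statement's English description precedes it below -/
import Mathlib

section
/- ('Pick-a-number trick') Let p ≥ 2 and n ≥ 1 be natural numbers, and let β satisfy p^β > n. Define inductively, for 1 ≤ r ≤ p^β, the finite multiset 𝒰^0_r = {r}, and for γ ≥ 1, writing r = m p^γ + j with 0 ≤ j < p^γ: 𝒰^γ_r = 𝒰^{γ−1}_{m p^γ + j} ∪ 𝒰^{γ−1}_{m p^γ − j} if p ∤ m and j ≠ 0, and 𝒰^γ_r = 𝒰^{γ−1}_r otherwise. Let J = 𝒰^β_n. Then n = Σ_{j ∈ J} Π_i (j_i + 1), where j − 1 = Σ_i j_i p^i is the base-p expansion of j − 1. -/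
/-- The recursively defined multisets `𝒰^γ_r`:  `𝒰^0_r = {r}` and, writing
`r = m·p^γ + j` with `0 ≤ j < p^γ`, `𝒰^γ_r = 𝒰^{γ−1}_{m p^γ + j} ∪ 𝒰^{γ−1}_{m p^γ − j}`
if `p ∤ m` and `j ≠ 0`, and `𝒰^γ_r = 𝒰^{γ−1}_r` otherwise. -/
def curlyU (p : ℕ) : ℕ → ℕ → Multiset ℕ
  | 0, r => {r}
  | γ + 1, r =>
    let m := r / p ^ (γ + 1)
    let j := r % p ^ (γ + 1)
    if ¬ p ∣ m ∧ j ≠ 0 then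
      curlyU p γ (m * p ^ (γ + 1) + j) + curlyU p γ (m * p ^ (γ + 1) - j)
    else
      curlyU p γ r

/-- The digit product of `j`: write `j − 1 = Σ_i j_i p^i` in base `p`; the product is
`Π_i (j_i + 1)`. -/
def digitProd (p j : ℕ) : ℕ := ((Nat.digits p (j - 1)).map (· + 1)).prod

/-- Digit product of `x` itself (no shift). -/
def Dp (p x : ℕ) : ℕ := ((Nat.digits p x).map (· + 1)).prod

lemma div_add (Q M x : ℕ) (hQ : 0 < Q) : (M * Q + x) / Q = M + x / Q := by
  rw [add_comm, Nat.add_mul_div_right x M hQ, add_comm]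

lemma mod_add (Q M x : ℕ) : (M * Q + x) % Q = x % Q := by
  rw [add_comm, Nat.add_mul_mod_self_right]

lemma Dp_eq {p : ℕ} (hp : 2 ≤ p) (M q : ℕ) (hq : q < p) :
    Dp p (M * p + q) = (q + 1) * Dp p M := by
  rcases Nat.eq_zero_or_pos (M * p + q) with h | h
  · have hM : M = 0 := by
      rcases Nat.eq_zero_or_pos M with h' | h'
      · exact h'
      · exfalso; nlinarith
    have hq0 : q = 0 := by omega
    simp [Dp, hM, hq0]
  · unfold Dp
    rw [Nat.digits_def' (by omega : 1 < p) h]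
    have h1 : (M * p + q) % p = q := by rw [mod_add, Nat.mod_eq_of_lt hq]
    have h2 : (M * p + q) / p = M := by
      rw [div_add _ _ _ (by omega), Nat.div_eq_of_lt hq, add_zero]
    rw [h1, h2]
    simp [mul_comm]

/-- The invariant function. -/
def gfun (p γ x : ℕ) : ℕ :=
  Dp p (x / p ^ γ) * (x % p ^ γ + 1) +
    (if p ∣ x / p ^ γ then 0 else Dp p (x / p ^ γ - 1) * (p ^ γ - 1 - x % p ^ γ))

lemma calc_key {p : ℕ} (hp : 2 ≤ p) (Q M q c : ℕ) (hq : q < p) (hc : c < Q) :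
    Dp p (M * p + q) * (c + 1) +
      (if p ∣ M * p + q then 0 else Dp p (M * p + q - 1) * (Q - 1 - c)) =
    Dp p M * (Q * q + c + 1) := by
  by_cases hq0 : q = 0
  · subst hq0
    rw [if_pos (by rw [add_zero]; exact dvd_mul_left p M), Dp_eq hp M 0 (by omega)]
    ring
  · rw [if_neg (by
      intro h
      exact hq0 (Nat.eq_zero_of_dvd_of_lt ((Nat.dvd_add_right (dvd_mul_left p M)).mp h) hq))]
    rw [Dp_eq hp M q hq]
    have e : M * p + q - 1 = M * p + (q - 1) := by omega
    rw [e, Dp_eq hp M (q - 1) (by omega)]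
    obtain ⟨c', rfl⟩ : ∃ c', Q = c + c' + 1 := ⟨Q - c - 1, by omega⟩
    obtain ⟨q', rfl⟩ : ∃ q', q = q' + 1 := ⟨q - 1, by omega⟩
    have e1 : q' + 1 - 1 = q' := by omega
    have e2 : c + c' + 1 - 1 - c = c' := by omega
    rw [e1, e2]
    ring

lemma gfun_key {p : ℕ} (hp : 2 ≤ p) (γ M x : ℕ) (hx : x < p ^ (γ + 1)) :
    gfun p γ (M * p ^ (γ + 1) + x) = Dp p M * (x + 1) := by
  have hQ : 0 < p ^ γ := Nat.pow_pos (by omega)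
  have hP : p ^ (γ + 1) = p ^ γ * p := pow_succ p γ
  have hqp : x / p ^ γ < p := Nat.div_lt_of_lt_mul (by rw [← hP]; exact hx)
  have hdiv : (M * p ^ (γ + 1) + x) / p ^ γ = M * p + x / p ^ γ := by
    have e : M * p ^ (γ + 1) + x = (M * p) * p ^ γ + x := by rw [hP]; ring
    rw [e, div_add _ _ _ hQ]
  have hmod : (M * p ^ (γ + 1) + x) % p ^ γ = x % p ^ γ := by
    have e : M * p ^ (γ + 1) + x = (M * p) * p ^ γ + x := by rw [hP]; ring
    rw [e, mod_add]
  unfold gfun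
  rw [hdiv, hmod, calc_key hp (p ^ γ) M (x / p ^ γ) (x % p ^ γ) hqp (Nat.mod_lt _ hQ)]
  rw [Nat.div_add_mod x (p ^ γ)]

lemma sum_eq {p : ℕ} (hp : 2 ≤ p) :
    ∀ γ r : ℕ, 1 ≤ r → ((curlyU p γ r).map (digitProd p)).sum = gfun p γ (r - 1) := by
  intro γ
  induction γ with
  | zero =>
    intro r hr
    have h0 : curlyU p 0 r = {r} := rfl
    rw [h0]
    simp only [Multiset.map_singleton, Multiset.sum_singleton]
    unfold gfun digitProd Dp
    simp only [pow_zero, Nat.div_one, Nat.mod_one]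
    have h1 : (1 : ℕ) - 1 - 0 = 0 := rfl
    rw [h1, mul_zero, ite_self, add_zero]
    norm_num
  | succ γ ih =>
    intro r hr
    have hP : 0 < p ^ (γ + 1) := Nat.pow_pos (by omega)
    set m := r / p ^ (γ + 1) with hm
    set j := r % p ^ (γ + 1) with hj
    have hjP : j < p ^ (γ + 1) := Nat.mod_lt _ hP
    have hrmj : r = m * p ^ (γ + 1) + j := by
      rw [hm, hj, mul_comm]; exact (Nat.div_add_mod r _).symm
    have hcu : curlyU p (γ + 1) r =
        if ¬ p ∣ m ∧ j ≠ 0 then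
          curlyU p γ (m * p ^ (γ + 1) + j) + curlyU p γ (m * p ^ (γ + 1) - j)
        else curlyU p γ r := rfl
    clear_value m j
    clear hm hj
    rw [hcu]
    by_cases hcond : ¬ p ∣ m ∧ j ≠ 0
    · rw [if_pos hcond]
      obtain ⟨hpm, hj0⟩ := hcond
      have hm1 : 1 ≤ m := by
        rcases Nat.eq_zero_or_pos m with h | h
        · exact absurd (h ▸ dvd_zero p) hpm
        · exact h
      have hPle : p ^ (γ + 1) ≤ m * p ^ (γ + 1) := Nat.le_mul_of_pos_left _ hm1
      have hmul : (m - 1) * p ^ (γ + 1) + p ^ (γ + 1) = m * p ^ (γ + 1) := by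
        have e : m - 1 + 1 = m := by omega
        calc (m - 1) * p ^ (γ + 1) + p ^ (γ + 1) = (m - 1 + 1) * p ^ (γ + 1) := by ring
          _ = m * p ^ (γ + 1) := by rw [e]
      rw [Multiset.map_add, Multiset.sum_add]
      rw [ih (m * p ^ (γ + 1) + j) (by omega), ih (m * p ^ (γ + 1) - j) (by omega)]
      have e1 : m * p ^ (γ + 1) + j - 1 = m * p ^ (γ + 1) + (j - 1) := by omega
      have e2 : m * p ^ (γ + 1) - j - 1 = (m - 1) * p ^ (γ + 1) + (p ^ (γ + 1) - j - 1) := by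
        omega
      rw [e1, e2, gfun_key hp γ m (j - 1) (by omega),
        gfun_key hp γ (m - 1) (p ^ (γ + 1) - j - 1) (by omega)]
      have e3 : r - 1 = m * p ^ (γ + 1) + (j - 1) := by omega
      unfold gfun
      rw [e3, div_add _ _ _ hP, Nat.div_eq_of_lt (by omega : j - 1 < p ^ (γ + 1)), add_zero,
        mod_add, Nat.mod_eq_of_lt (by omega : j - 1 < p ^ (γ + 1)), if_neg hpm]
      have e4 : j - 1 + 1 = j := by omega
      have e5 : p ^ (γ + 1) - 1 - (j - 1) = p ^ (γ + 1) - j - 1 + 1 := by omega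
      rw [e4, e5]
    · rw [if_neg hcond, ih r hr]
      push_neg at hcond
      by_cases hj0 : j = 0
      · have hm1 : 1 ≤ m := by
          rcases Nat.eq_zero_or_pos m with h | h
          · exfalso
            have : m * p ^ (γ + 1) = 0 := by rw [h, zero_mul]
            omega
          · exact h
        have hmul : (m - 1) * p ^ (γ + 1) + p ^ (γ + 1) = m * p ^ (γ + 1) := by
          have e : m - 1 + 1 = m := by omega
          calc (m - 1) * p ^ (γ + 1) + p ^ (γ + 1) = (m - 1 + 1) * p ^ (γ + 1) := by ring
            _ = m * p ^ (γ + 1) := by rw [e]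
        have e : r - 1 = (m - 1) * p ^ (γ + 1) + (p ^ (γ + 1) - 1) := by omega
        rw [e, gfun_key hp γ (m - 1) (p ^ (γ + 1) - 1) (by omega)]
        unfold gfun
        rw [div_add _ _ _ hP, Nat.div_eq_of_lt (by omega : p ^ (γ + 1) - 1 < p ^ (γ + 1)),
          add_zero, mod_add, Nat.mod_eq_of_lt (by omega : p ^ (γ + 1) - 1 < p ^ (γ + 1))]
        have e0 : p ^ (γ + 1) - 1 - (p ^ (γ + 1) - 1) = 0 := by omega
        rw [e0, mul_zero, ite_self, add_zero]
      · have hpm : p ∣ m := by by_contra h; exact hj0 (hcond h)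
        have e : r - 1 = m * p ^ (γ + 1) + (j - 1) := by omega
        rw [e, gfun_key hp γ m (j - 1) (by omega)]
        unfold gfun
        rw [div_add _ _ _ hP, Nat.div_eq_of_lt (by omega : j - 1 < p ^ (γ + 1)), add_zero,
          mod_add, Nat.mod_eq_of_lt (by omega : j - 1 < p ^ (γ + 1)), if_pos hpm, add_zero]

/-- "Pick-a-number trick": for `p ≥ 2`, `n ≥ 1` and `p^β > n`, with `J = 𝒰^β_n`,
`n = Σ_{j ∈ J} Π_i (j_i + 1)` where the `j_i` are the base-`p` digits of `j − 1`. -/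
theorem pick_a_number (p n β : ℕ) (hp : 2 ≤ p) (hn : 1 ≤ n) (hβ : n < p ^ β) :
    n = ((curlyU p β n).map (digitProd p)).sum := by
  rw [sum_eq hp β n hn]
  unfold gfun
  have hdiv : (n - 1) / p ^ β = 0 := Nat.div_eq_of_lt (by omega)
  have hmod : (n - 1) % p ^ β = n - 1 := Nat.mod_eq_of_lt (by omega)
  rw [hdiv, hmod, if_pos (dvd_zero p)]
  have h1 : Dp p 0 = 1 := by simp [Dp]
  rw [h1, add_zero, one_mul]
  omega
end

section
/- Let p be a prime and q = p^α. The ring ℤ[X_0,…,X_{α−1}]/([p]_{X_0}, F_1, …, F_{α−1}), where [p] is the p-th quantum polynomial and F_j = (X_j − 2[p]_{X_{j−1}} − 2[p−1]_{X_{j−1}})·[p]_{X_j}, is a free ℤ-module of rank φ(q) = p^{α−1}(p−1). -/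
open Polynomial MvPolynomial

/-- The quantum numbers `[n] ∈ ℤ[X]`: `[0] = 0`, `[1] = 1`, `[n] = X·[n-1] − [n-2]`. -/
noncomputable def qnum : ℕ → Polynomial ℤ
  | 0 => 0
  | 1 => 1
  | n + 2 => Polynomial.X * qnum (n + 1) - qnum n

/-- For `1 ≤ j < α`, the polynomial
`F_j = (X_j − 2[p]_{X_{j−1}} − 2[p−1]_{X_{j−1}})·[p]_{X_j} ∈ ℤ[X_0,…,X_{α−1}]`. -/
noncomputable def Fpoly (p α : ℕ) (j : Fin α) : MvPolynomial (Fin α) ℤ :=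
  (MvPolynomial.X j - 2 * Polynomial.aeval (MvPolynomial.X (⟨j.1 - 1, lt_of_le_of_lt (Nat.sub_le _ _) j.2⟩ : Fin α)) (qnum p)
      - 2 * Polynomial.aeval (MvPolynomial.X (⟨j.1 - 1, lt_of_le_of_lt (Nat.sub_le _ _) j.2⟩ : Fin α)) (qnum (p - 1)))
    * Polynomial.aeval (MvPolynomial.X j) (qnum p)

open Ideal

noncomputable def lastVarEquiv (α : ℕ) :
    MvPolynomial (Fin (α+1)) ℤ ≃ₐ[ℤ] Polynomial (MvPolynomial (Fin α) ℤ) :=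
  (renameEquiv ℤ finSuccEquivLast).trans (optionEquivLeft ℤ (Fin α))

lemma lastVarEquiv_X_castSucc {α : ℕ} (j : Fin α) :
    lastVarEquiv α (MvPolynomial.X j.castSucc) = Polynomial.C (MvPolynomial.X j) := by
  simp [lastVarEquiv, optionEquivLeft_X_some]

lemma lastVarEquiv_X_last {α : ℕ} :
    lastVarEquiv α (MvPolynomial.X (Fin.last α)) = Polynomial.X := by
  simp [lastVarEquiv, optionEquivLeft_X_none]

lemma aeval_C_poly {S : Type*} [CommRing S] [Algebra ℤ S] (s : S) (q : Polynomial ℤ) :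
    Polynomial.aeval (Polynomial.C s : Polynomial S) q = Polynomial.C (Polynomial.aeval s q) := by
  have := Polynomial.aeval_algHom_apply (AlgHom.mk' (Polynomial.C : S →+* Polynomial S)
    (fun c x => by simp [Algebra.smul_def]) : S →ₐ[ℤ] Polynomial S) s q
  simpa using this

lemma aeval_X_poly {S : Type*} [CommRing S] [Algebra ℤ S] (q : Polynomial ℤ) :
    Polynomial.aeval (Polynomial.X : Polynomial S) q = q.map (algebraMap ℤ S) := by
  have h : (Polynomial.aeval (Polynomial.X : Polynomial S)).toRingHom =
      Polynomial.mapRingHom (algebraMap ℤ S) := by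
    apply Polynomial.ringHom_ext <;> simp
  exact congrArg (fun f => f q) (congrArg DFunLike.coe h)

noncomputable def genSet (p α : ℕ) (hα : 0 < α) : Set (MvPolynomial (Fin α) ℤ) :=
  {Polynomial.aeval (MvPolynomial.X (⟨0, hα⟩ : Fin α)) (qnum p)} ∪
    (Fpoly p α '' {j : Fin α | 1 ≤ (j : ℕ)})

noncomputable def fpol (p α : ℕ) (hα : 0 < α) : Polynomial (MvPolynomial (Fin α) ℤ) :=
  (Polynomial.X
      - 2 * Polynomial.C (Polynomial.aeval (MvPolynomial.X (⟨α - 1, Nat.sub_lt hα Nat.one_pos⟩ : Fin α)) (qnum p))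
      - 2 * Polynomial.C (Polynomial.aeval (MvPolynomial.X (⟨α - 1, Nat.sub_lt hα Nat.one_pos⟩ : Fin α)) (qnum (p - 1))))
    * (qnum p).map (algebraMap ℤ (MvPolynomial (Fin α) ℤ))

lemma lastVarEquiv_aeval_X {α : ℕ} (i : Fin (α+1)) (q : Polynomial ℤ) :
    lastVarEquiv α (Polynomial.aeval (MvPolynomial.X i) q)
      = Polynomial.aeval (lastVarEquiv α (MvPolynomial.X i)) q :=
  (Polynomial.aeval_algHom_apply (lastVarEquiv α) (MvPolynomial.X i) q).symm

lemma lastVarEquiv_Fpoly_castSucc {p α : ℕ} (j : Fin α) :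
    lastVarEquiv α (Fpoly p (α+1) j.castSucc) = Polynomial.C (Fpoly p α j) := by
  have hidx : (⟨(j.castSucc).1 - 1, lt_of_le_of_lt (Nat.sub_le _ _) (j.castSucc).2⟩ : Fin (α+1))
      = (⟨j.1 - 1, lt_of_le_of_lt (Nat.sub_le _ _) j.2⟩ : Fin α).castSucc := rfl
  simp only [Fpoly, hidx, _root_.map_mul, map_sub, map_ofNat, lastVarEquiv_aeval_X,
    lastVarEquiv_X_castSucc, aeval_C_poly]

lemma lastVarEquiv_Fpoly_last {p α : ℕ} (hα : 0 < α) :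
    lastVarEquiv α (Fpoly p (α+1) (Fin.last α)) = fpol p α hα := by
  have hidx : (⟨(Fin.last α).1 - 1, lt_of_le_of_lt (Nat.sub_le _ _) (Fin.last α).2⟩ : Fin (α+1))
      = (⟨α - 1, Nat.sub_lt hα Nat.one_pos⟩ : Fin α).castSucc := rfl
  simp only [Fpoly, fpol, hidx, _root_.map_mul, map_sub, map_ofNat, lastVarEquiv_aeval_X,
    lastVarEquiv_X_castSucc, lastVarEquiv_X_last, aeval_C_poly, aeval_X_poly]

lemma lastVarEquiv_gen0 {p α : ℕ} (hα : 0 < α) :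
    lastVarEquiv α (Polynomial.aeval (MvPolynomial.X (⟨0, Nat.succ_pos α⟩ : Fin (α+1))) (qnum p))
      = Polynomial.C (Polynomial.aeval (MvPolynomial.X (⟨0, hα⟩ : Fin α)) (qnum p)) := by
  have h0 : (⟨0, Nat.succ_pos α⟩ : Fin (α+1)) = (⟨0, hα⟩ : Fin α).castSucc := rfl
  simp only [h0, lastVarEquiv_aeval_X, lastVarEquiv_X_castSucc, aeval_C_poly]

lemma indexSet_split (α : ℕ) (hα : 0 < α) :
    {j : Fin (α+1) | 1 ≤ (j : ℕ)} =
      (Fin.castSucc '' {j : Fin α | 1 ≤ (j : ℕ)}) ∪ {Fin.last α} := by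
  ext j
  simp only [Set.mem_setOf_eq, Set.mem_union, Set.mem_image, Set.mem_singleton_iff]
  constructor
  · intro hj
    rcases Nat.lt_or_ge j.1 α with h | h
    · exact Or.inl ⟨⟨j.1, h⟩, hj, by ext; simp⟩
    · right; ext; simp; omega
  · rintro (⟨k, hk, rfl⟩ | rfl)
    · simpa using hk
    · simp only [Fin.val_last]; omega

lemma image_genSet (p α : ℕ) (hα : 0 < α) :
    (lastVarEquiv α) '' (genSet p (α+1) (Nat.succ_pos α)) =
      (Polynomial.C '' genSet p α hα) ∪ {fpol p α hα} := by
  rw [genSet, indexSet_split α hα, Set.image_union, Set.image_union, Set.image_union,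
    Set.image_singleton, Set.image_singleton, Set.image_image, Set.image_image,
    Set.image_singleton, genSet, Set.image_union, Set.image_singleton, Set.image_image]
  rw [lastVarEquiv_gen0 hα, lastVarEquiv_Fpoly_last hα]
  have : (fun x => lastVarEquiv α (Fpoly p (α+1) (Fin.castSucc x)))
      = fun x => Polynomial.C (Fpoly p α x) := by
    funext x; exact lastVarEquiv_Fpoly_castSucc x
  rw [this, Set.union_assoc]

lemma qnum_natDegree_le : ∀ n, (qnum n).natDegree ≤ n - 1 := by
  intro n
  induction n using Nat.strong_induction_on with
  | _ n ih =>
    match n with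
    | 0 => simp [qnum]
    | 1 => simp [qnum]
    | n + 2 =>
      rw [qnum]
      refine le_trans (natDegree_sub_le _ _) (max_le ?_ ?_)
      · refine le_trans (natDegree_mul_le) ?_
        have := ih (n+1) (by omega)
        simp only [natDegree_X]; omega
      · have := ih n (by omega); omega

lemma qnum_monic : ∀ n, (qnum (n + 1)).Monic ∧ (qnum (n + 1)).natDegree = n := by
  intro n
  induction n using Nat.strong_induction_on with
  | _ n ih =>
    match n with
    | 0 => exact ⟨monic_one, by simp [qnum]⟩
    | n + 1 =>
      obtain ⟨hm, hd⟩ := ih n (by omega)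
      have hXq : (Polynomial.X * qnum (n + 1)).Monic := (monic_X).mul hm
      have hdeg : (Polynomial.X * qnum (n + 1)).natDegree = n + 1 := by
        rw [(monic_X).natDegree_mul hm, natDegree_X, hd]; omega
      have hlt : (qnum n).natDegree < (Polynomial.X * qnum (n+1)).natDegree := by
        have := qnum_natDegree_le n
        omega
      constructor
      · show (qnum (n + 2)).Monic
        rw [qnum]
        exact hXq.sub_of_left (degree_lt_degree hlt)
      · show (qnum (n + 2)).natDegree = n + 1
        rw [qnum, natDegree_sub_eq_left_of_natDegree_lt hlt, hdeg]

lemma fpol_monic (p α : ℕ) (hα : 0 < α) (hp : 2 ≤ p) :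
    (fpol p α hα).Monic ∧ (fpol p α hα).natDegree = p := by
  have hq := qnum_monic (p - 1)
  have hp1 : p - 1 + 1 = p := by omega
  rw [hp1] at hq
  rw [fpol]
  set a : MvPolynomial (Fin α) ℤ :=
    Polynomial.aeval (MvPolynomial.X (⟨α - 1, Nat.sub_lt hα Nat.one_pos⟩ : Fin α)) (qnum p)
  set b : MvPolynomial (Fin α) ℤ :=
    Polynomial.aeval (MvPolynomial.X (⟨α - 1, Nat.sub_lt hα Nat.one_pos⟩ : Fin α)) (qnum (p - 1))
  have h1 : (Polynomial.X - 2 * Polynomial.C a - 2 * Polynomial.C b)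
      = Polynomial.X - Polynomial.C (2 * a + 2 * b) := by
    simp only [map_add, _root_.map_mul, map_ofNat]
    ring
  have hmonic1 : (Polynomial.X - 2 * Polynomial.C a - 2 * Polynomial.C b).Monic := by
    rw [h1]; exact monic_X_sub_C _
  have hmq : ((qnum p).map (algebraMap ℤ (MvPolynomial (Fin α) ℤ))).Monic := hq.1.map _
  refine ⟨hmonic1.mul hmq, ?_⟩
  rw [hmonic1.natDegree_mul hmq, h1, natDegree_X_sub_C, hq.1.natDegree_map, hq.2]
  omega

variable {S : Type*} [CommRing S]

noncomputable def quotSupEquiv (J : Ideal S) (f : S[X]) :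
    (S[X] ⧸ (Ideal.map Polynomial.C J ⊔ Ideal.span {f})) ≃+*
      AdjoinRoot (f.map (Ideal.Quotient.mk J)) :=
  ((DoubleQuot.quotQuotEquivQuotSup (J.map Polynomial.C) (Ideal.span {f})).symm.trans
    (Ideal.quotientEquiv _ (Ideal.span {f.map (Ideal.Quotient.mk J)})
      (J.polynomialQuotientEquivQuotientPolynomial).symm
      (by
        rw [Ideal.map_map, Ideal.map_span, Set.image_singleton, RingHom.comp_apply]
        norm_num [Ideal.polynomialQuotientEquivQuotientPolynomial_symm_mk])))

lemma basis_step (J : Ideal S) (f : S[X]) {N d : ℕ}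
    (bS : Module.Basis (Fin N) ℤ (S ⧸ J)) (hm : (f.map (Ideal.Quotient.mk J)).Monic)
    (hd : (f.map (Ideal.Quotient.mk J)).natDegree = d) :
    Nonempty (Module.Basis (Fin (N * d)) ℤ (S[X] ⧸ (Ideal.map Polynomial.C J ⊔ Ideal.span {f}))) := by
  have bA := AdjoinRoot.powerBasisAux' hm
  have bT := bS.smulTower bA
  exact ⟨(bT.map (quotSupEquiv J f).symm.toAddEquiv.toIntLinearEquiv).reindex
    (((Equiv.refl _).prodCongr (finCongr (by rw [hd]))).trans finProdFinEquiv)⟩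

set_option synthInstance.maxHeartbeats 1000000 in
set_option maxHeartbeats 1000000 in
lemma genSet_basis (p : ℕ) (hp : 2 ≤ p) :
    ∀ α, ∀ hα : 0 < α,
    Nonempty (Module.Basis (Fin ((p - 1) * p ^ (α - 1))) ℤ
      (MvPolynomial (Fin α) ℤ ⧸ Ideal.span (genSet p α hα))) := by
  intro α
  induction α with
  | zero => exact fun h => absurd h (lt_irrefl 0)
  | succ α ih =>
    intro _
    rcases Nat.eq_zero_or_pos α with h0 | hα
    · subst h0
      -- base case: α + 1 = 1
      have himg : (lastVarEquiv 0) '' (genSet p 1 Nat.one_pos) =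
          {(qnum p).map (algebraMap ℤ (MvPolynomial (Fin 0) ℤ))} := by
        have hempty : {j : Fin 1 | 1 ≤ (j : ℕ)} = ∅ := by
          ext j
          simp only [Set.mem_setOf_eq, Set.mem_empty_iff_false, iff_false, not_le]
          exact j.2
        rw [genSet, hempty, Set.image_empty, Set.union_empty, Set.image_singleton,
          show (⟨0, Nat.one_pos⟩ : Fin 1) = Fin.last 0 from rfl,
          lastVarEquiv_aeval_X, lastVarEquiv_X_last, aeval_X_poly]
      have hq := qnum_monic (p - 1)
      rw [show p - 1 + 1 = p by omega] at hq
      have hIJ : (⊥ : Ideal (MvPolynomial (Fin 0) ℤ)).map Polynomial.C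
            ⊔ Ideal.span {(qnum p).map (algebraMap ℤ (MvPolynomial (Fin 0) ℤ))}
          = (Ideal.span (genSet p 1 Nat.one_pos)).map
              ((lastVarEquiv 0).toRingEquiv : MvPolynomial (Fin 1) ℤ →+* _) := by
        rw [Ideal.map_bot, bot_sup_eq, Ideal.map_span, ← himg]
        rfl
      have E := Ideal.quotientEquiv (Ideal.span (genSet p 1 Nat.one_pos))
        ((⊥ : Ideal (MvPolynomial (Fin 0) ℤ)).map Polynomial.C
          ⊔ Ideal.span {(qnum p).map (algebraMap ℤ (MvPolynomial (Fin 0) ℤ))})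
        (lastVarEquiv 0).toRingEquiv hIJ
      have eZ : ℤ ≃+* (MvPolynomial (Fin 0) ℤ ⧸ (⊥ : Ideal (MvPolynomial (Fin 0) ℤ))) :=
        ((isEmptyAlgEquiv ℤ (Fin 0)).symm.toRingEquiv).trans (RingEquiv.quotientBot _).symm
      have bS := (Module.Basis.singleton (Fin 1) ℤ).map eZ.toAddEquiv.toIntLinearEquiv
      haveI : Nontrivial (MvPolynomial (Fin 0) ℤ ⧸ (⊥ : Ideal (MvPolynomial (Fin 0) ℤ))) :=
        nontrivial_of_ne (bS ⟨0, Nat.one_pos⟩) 0 (bS.ne_zero _)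
      obtain ⟨bT⟩ := basis_step (⊥ : Ideal (MvPolynomial (Fin 0) ℤ))
        ((qnum p).map (algebraMap ℤ (MvPolynomial (Fin 0) ℤ))) bS
        ((hq.1.map _).map _)
        (by rw [(hq.1.map _).natDegree_map, hq.1.natDegree_map, hq.2])
      exact ⟨(bT.map E.symm.toAddEquiv.toIntLinearEquiv).reindex (finCongr (by simp))⟩
    · have hq := fpol_monic p α hα hp
      have hIJ : (Ideal.span (genSet p α hα)).map Polynomial.C ⊔ Ideal.span {fpol p α hα}
          = (Ideal.span (genSet p (α+1) (Nat.succ_pos α))).map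
              ((lastVarEquiv α).toRingEquiv : MvPolynomial (Fin (α+1)) ℤ →+* _) := by
        rw [Ideal.map_span, Ideal.map_span, ← Ideal.span_union, ← image_genSet p α hα]
        rfl
      have E := Ideal.quotientEquiv (Ideal.span (genSet p (α+1) (Nat.succ_pos α)))
        ((Ideal.span (genSet p α hα)).map Polynomial.C ⊔ Ideal.span {fpol p α hα})
        (lastVarEquiv α).toRingEquiv hIJ
      obtain ⟨bS⟩ := ih hα
      haveI : Nontrivial (MvPolynomial (Fin α) ℤ ⧸ span (genSet p α hα)) :=
        nontrivial_of_ne (bS ⟨0, Nat.mul_pos (by omega) (pow_pos (by omega : 0 < p) _)⟩) 0 (bS.ne_zero _)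
      obtain ⟨bT⟩ := basis_step (Ideal.span (genSet p α hα)) (fpol p α hα) bS
        (hq.1.map _) (by rw [hq.1.natDegree_map, hq.2])
      refine ⟨(bT.map E.symm.toAddEquiv.toIntLinearEquiv).reindex (finCongr ?_)⟩
      have : p ^ (α - 1) * p = p ^ α := by
        conv_rhs => rw [show α = (α - 1) + 1 by omega]
        rw [pow_succ]
      simp only [Nat.add_sub_cancel]
      rw [mul_assoc, this]

/-- `ℤ[X_0,…,X_{α−1}]/([p]_{X_0}, F_1, …, F_{α−1})` is a free `ℤ`-module of rank
`φ(p^α) = p^{α−1}(p−1)`. -/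
theorem noninduced_presentation_free (p α : ℕ) (hp : p.Prime) (hα : 0 < α) :
    Nat.totient (p ^ α) = p ^ (α - 1) * (p - 1) ∧
    Nonempty (Module.Basis (Fin (Nat.totient (p ^ α))) ℤ
      (MvPolynomial (Fin α) ℤ ⧸
        Ideal.span ({Polynomial.aeval (MvPolynomial.X (⟨0, hα⟩ : Fin α)) (qnum p)} ∪
          (Fpoly p α '' {j : Fin α | 1 ≤ (j : ℕ)})))) := by
  have ht : Nat.totient (p ^ α) = p ^ (α - 1) * (p - 1) := Nat.totient_prime_pow hp hα
  refine ⟨ht, ?_⟩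
  obtain ⟨b⟩ := genSet_basis p hp.two_le α hα
  exact ⟨b.reindex (finCongr (by rw [ht]; ring))⟩
end
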